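/- Let T be a finite tree and let k be a positive integer. If the diameter of T is at least 2k, then T contains a k-leaf. -/

import Mathlib

open SimpleGraph

universe u v

namespace EternalDom

variable {V : Type u} {W : Type v}

/-- `x` is within distance `k` of `y` in `G` (in particular, a path between them exists). -/
def WithinDist (G : SimpleGraph V) (k : ℕ) (x y : V) : Prop :=
  G.Reachable x y ∧ G.dist x y ≤ k

/-- A multiset of guards is distance-`k` dominating: every vertex is within
distance `k` of some guard. -/
def IsDistKDomMultiset (G : SimpleGraph V) (k : ℕ) (D : Multiset V) : Prop :=
  ∀ w : V, ∃ x ∈ D, WithinDist G k x w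

/-- `F` is an eternal distance-`k` defence family of guard configurations of size `m`:
a nonempty family of distance-`k` dominating multisets, all of cardinality `m`, such that
for every configuration `D ∈ F` and every attacked vertex `w` there is a configuration
`D' ∈ F` containing `w` that is obtained from `D` by a matching (bijection) moving each
guard a distance of at most `k`. -/
def IsEternalFamily (G : SimpleGraph V) (k m : ℕ) (F : Set (Multiset V)) : Prop :=
  F.Nonempty ∧
    (∀ D ∈ F, Multiset.card D = m ∧ IsDistKDomMultiset G k D) ∧
    (∀ D ∈ F, ∀ w : V, ∃ D' ∈ F, w ∈ D' ∧ Multiset.Rel (WithinDist G k) D D')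

/-- The eternal distance-`k` domination number `γ^∞_{all,k}(G)`. -/
noncomputable def eternalNum (G : SimpleGraph V) (k : ℕ) : ℕ :=
  sInf {m | ∃ F : Set (Multiset V), IsEternalFamily G k m F}

/-- `x` dominates `w`: they are equal or adjacent. -/
def Dominates (G : SimpleGraph V) (x w : V) : Prop := w = x ∨ G.Adj x w

/-- A dominating set of vertices. -/
def IsDomSet (G : SimpleGraph V) (D : Set V) : Prop := ∀ w : V, ∃ x ∈ D, Dominates G x w

/-- The domination number `γ(G)`. -/
noncomputable def domNum (G : SimpleGraph V) : ℕ :=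
  sInf {n | ∃ D : Set V, IsDomSet G D ∧ D.ncard = n}

/-- A distance-`k` dominating set of vertices. -/
def IsDistKDomSet (G : SimpleGraph V) (k : ℕ) (D : Set V) : Prop :=
  ∀ w : V, ∃ x ∈ D, WithinDist G k x w

/-- The distance-`k` domination number `γ_k(G)`. -/
noncomputable def distDomNum (G : SimpleGraph V) (k : ℕ) : ℕ :=
  sInf {n | ∃ D : Set V, IsDistKDomSet G k D ∧ D.ncard = n}

/-- A leaf: a vertex of degree 1, i.e. with a unique neighbour. -/
def IsLeafV (G : SimpleGraph V) (x : V) : Prop := ∃! y, G.Adj x y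

/-- A stem: a vertex adjacent to at least one leaf. -/
def IsStem (G : SimpleGraph V) (x : V) : Prop := ∃ y, G.Adj x y ∧ IsLeafV G y

/-- `k`-leaves: a `0`-leaf is a leaf; for `k > 0`, `v` is a `k`-leaf iff `v` is adjacent to
some `(k-1)`-leaf and all but at most one of the neighbours of `v` are `t`-leaves for some
`t < k`. -/
def IsKLeaf (G : SimpleGraph V) : ℕ → V → Prop
  | 0, v => IsLeafV G v
  | (k + 1), v =>
      (∃ u, G.Adj v u ∧ IsKLeaf G k u) ∧
        ∃ w : V, ∀ x : V, G.Adj v x → x ≠ w → ∃ t, ∃ _ : t ≤ k, IsKLeaf G t x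
  termination_by k _ => k
  decreasing_by all_goals omega

/-- For a 2-leaf `v`, the set `L(v)`: the union of `L[u]` over all neighbours `u` of `v`
which are 0-leaves or 1-leaves, where for a 1-leaf `u`, `L[u]` consists of `u` and the leaves
adjacent to `u`. -/
def Lopen (G : SimpleGraph V) (v : V) : Set V :=
  {x | ∃ u, G.Adj v u ∧
    ((IsKLeaf G 0 u ∧ x = u) ∨
      (IsKLeaf G 1 u ∧ (x = u ∨ (G.Adj u x ∧ IsKLeaf G 0 x))))}

/-- For a 2-leaf `v`, the set `L[v] = L(v) ∪ {v}`. -/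
def Lclosed (G : SimpleGraph V) (v : V) : Set V := insert v (Lopen G v)

/-- A graph is eternal distance-2 domination critical if deleting any non-cut vertex
(one whose removal leaves the graph connected) strictly decreases the eternal
distance-2 domination number. -/
def EternalCritical (G : SimpleGraph V) : Prop :=
  ∀ x : V, (G.induce {y | y ≠ x}).Connected →
    eternalNum (G.induce {y | y ≠ x}) 2 < eternalNum G 2

/-- Attach a pendant path `x₁ x₂ … xₙ` on `n` new vertices to the vertex `y`,
via the edge `y x₁`. -/
def attachPath (G : SimpleGraph V) (y : V) (n : ℕ) : SimpleGraph (V ⊕ Fin n) :=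
  G.map (⟨Sum.inl, Sum.inl_injective⟩ : V ↪ V ⊕ Fin n) ⊔ (pathGraph n).map (⟨Sum.inr, Sum.inr_injective⟩ : Fin n ↪ V ⊕ Fin n) ⊔
    fromEdgeSet {e | ∃ h : 0 < n, e = s(Sum.inl y, Sum.inr ⟨0, h⟩)}

/-- The star `K_{1,m}`: centre `0`, leaves the `m` nonzero elements of `Fin (m+1)`. -/
def starGraph (m : ℕ) : SimpleGraph (Fin (m + 1)) where
  Adj x y := (x = 0 ∧ y ≠ 0) ∨ (y = 0 ∧ x ≠ 0)
  symm := by tauto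
  loopless := ⟨by rintro x (⟨h1, h2⟩ | ⟨h1, h2⟩) <;> exact h2 h1⟩

/-- Disjoint union of `G` and the star `K_{1,m}` together with one edge joining the
vertex `a` of the star to the vertex `y` of `G`. -/
def attachStar (G : SimpleGraph V) (y : V) (m : ℕ) (a : Fin (m + 1)) :
    SimpleGraph (V ⊕ Fin (m + 1)) :=
  G.map (⟨Sum.inl, Sum.inl_injective⟩ : V ↪ V ⊕ Fin (m + 1)) ⊔ (starGraph m).map (⟨Sum.inr, Sum.inr_injective⟩ : Fin (m + 1) ↪ V ⊕ Fin (m + 1)) ⊔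
    fromEdgeSet {s(Sum.inl y, Sum.inr a)}

/-- From `G` and a vertex `v`: add a new star `K_{1,m}` joined by an edge from its centre
to `v`, together with `t` new leaves adjacent to `v`. -/
def addStarAndLeaves (G : SimpleGraph V) (v : V) (m t : ℕ) :
    SimpleGraph (V ⊕ (Fin (m + 1) ⊕ Fin t)) :=
  G.map (⟨Sum.inl, Sum.inl_injective⟩ : V ↪ V ⊕ (Fin (m + 1) ⊕ Fin t)) ⊔
    (starGraph m).map (⟨Sum.inr ∘ Sum.inl, Sum.inr_injective.comp Sum.inl_injective⟩ : Fin (m + 1) ↪ V ⊕ (Fin (m + 1) ⊕ Fin t)) ⊔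
    fromEdgeSet ({s(Sum.inl v, Sum.inr (Sum.inl 0))} ∪
      {e | ∃ i : Fin t, e = s(Sum.inl v, Sum.inr (Sum.inr i))})

/-- From `G` and a vertex `v`: add two new stars `K_{1,m}` and `K_{1,M}`, joining the
centre of each new star to `v` by an edge. -/
def addTwoStars (G : SimpleGraph V) (v : V) (m M : ℕ) :
    SimpleGraph (V ⊕ (Fin (m + 1) ⊕ Fin (M + 1))) :=
  G.map (⟨Sum.inl, Sum.inl_injective⟩ : V ↪ V ⊕ (Fin (m + 1) ⊕ Fin (M + 1))) ⊔
    (starGraph m).map (⟨Sum.inr ∘ Sum.inl, Sum.inr_injective.comp Sum.inl_injective⟩ : Fin (m + 1) ↪ V ⊕ (Fin (m + 1) ⊕ Fin (M + 1))) ⊔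
    (starGraph M).map (⟨Sum.inr ∘ Sum.inr, Sum.inr_injective.comp Sum.inr_injective⟩ : Fin (M + 1) ↪ V ⊕ (Fin (m + 1) ⊕ Fin (M + 1))) ⊔
    fromEdgeSet {s(Sum.inl v, Sum.inr (Sum.inl 0)), s(Sum.inl v, Sum.inr (Sum.inr 0))}

/-- The 1-sum of `G` and `H` at the vertex `u` of `G` and the vertex `w` of `H`:
the disjoint union of `G` and `H` with `u` and `w` identified. -/
def oneSum (G : SimpleGraph V) (H : SimpleGraph W) (u : V) (w : W) :
    SimpleGraph (V ⊕ {x : W // x ≠ w}) where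
  Adj x y :=
    match x, y with
    | Sum.inl a, Sum.inl b => G.Adj a b
    | Sum.inr a, Sum.inr b => H.Adj a.1 b.1
    | Sum.inl a, Sum.inr b => a = u ∧ H.Adj w b.1
    | Sum.inr a, Sum.inl b => b = u ∧ H.Adj w a.1
  symm := by
    refine ⟨?_⟩
    rintro (a | a) (b | b) h
    · exact h.symm
    · exact h
    · exact h
    · exact h.symm
  loopless := by
    refine ⟨?_⟩
    rintro (a | a) h
    · exact G.loopless.irrefl a h
    · exact H.loopless.irrefl a.1 h

/-!
Root the tree at an end `y` of a diametral path `x … y`. For `u ≠ y`, let `h(u)` be the height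
of the subtree hanging below `u`. By induction on `h(u)`, `u` is an `h(u)`-leaf: the children of
`u` have smaller heights, one of them has height `h(u) - 1`, and the parent of `u` is the one
neighbour that may be exceptional. Since no vertex is farther from `y` than `x`, the vertex at
distance `k` from `x` on the path has height exactly `k`, and it differs from `y` because the
path has length at least `2k > k`.
-/

end EternalDom

namespace SimpleGraph

variable {V : Type*} {G : SimpleGraph V} {x y z u w w' : V}

lemma Connected.exists_dist_eq_of_le (hc : G.Connected) {k : ℕ} (hk : k ≤ G.dist x y) :
    ∃ u, G.dist x u = k ∧ G.dist u y = G.dist x y - k := by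
  obtain ⟨p, hp⟩ := hc.exists_walk_length_eq_dist x y
  refine ⟨p.getVert k, ?_⟩
  have htake : G.dist x (p.getVert k) ≤ k :=
    (dist_le (p.take k)).trans (by simp [Walk.take_length])
  have hdrop : G.dist (p.getVert k) y ≤ G.dist x y - k :=
    (dist_le (p.drop k)).trans (by simp [Walk.drop_length, hp])
  have := hc.dist_triangle (u := x) (v := p.getVert k) (w := y)
  omega

lemma Connected.exists_adj_dist_eq_add_one (hc : G.Connected) (h : x ≠ y) :
    ∃ w, G.Adj x w ∧ G.dist x y = G.dist w y + 1 := by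
  have hpos : 1 ≤ G.dist x y := hc.pos_dist_of_ne h
  obtain ⟨w, hxw, hwy⟩ := hc.exists_dist_eq_of_le hpos
  exact ⟨w, dist_eq_one_iff_adj.mp hxw, by omega⟩

lemma IsTree.eq_of_adj_of_dist_lt (hG : G.IsTree) (hw : G.Adj u w) (hw' : G.Adj u w')
    (hwd : G.dist z w < G.dist z u) (hw'd : G.dist z w' < G.dist z u) : w = w' := by
  classical
  obtain ⟨p, hp, -⟩ := hG.connected.exists_path_of_dist z u
  have h_eq_penultimate : ∀ v, G.Adj u v → G.dist z v < G.dist z u → v = p.penultimate := by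
    intro v hv hvd
    obtain ⟨q, hq, hql⟩ := hG.connected.exists_path_of_dist z v
    have hu : u ∉ q.support := fun hu => by
      have := (dist_le (q.takeUntil u hu)).trans (q.length_takeUntil_le_length hu)
      omega
    exact hG.isAcyclic.eq_penultimate_of_adj_end hp hv
      (hG.isAcyclic.mem_support_of_ne_mem_support_of_adj_of_isPath hp hq hv hu)
  rw [h_eq_penultimate w hw hwd, h_eq_penultimate w' hw' hw'd]

lemma IsTree.dist_eq_add_one_of_adj_of_ne (hG : G.IsTree) (hw : G.Adj u w)
    (hwd : G.dist z w < G.dist z u) (hx : G.Adj u x) (hne : x ≠ w) :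
    G.dist z x = G.dist z u + 1 := by
  refine (hG.dist_eq_dist_add_one_of_adj z hx).resolve_left fun hxd => hne ?_
  exact hG.eq_of_adj_of_dist_lt hx hw (by omega) hwd

end SimpleGraph

namespace EternalDom

variable {V : Type*} [Fintype V] {G : SimpleGraph V} {y u x z : V} {n : ℕ}

open Classical in
/-- `u` lies on the path from the root `y` to `z` iff `dist y z = dist y u + dist u z`. -/
noncomputable def subtreeHeight (G : SimpleGraph V) (y u : V) : ℕ :=
  (Finset.univ.filter fun z => G.dist y z = G.dist y u + G.dist u z).sup (G.dist u)

lemma dist_le_subtreeHeight (h : G.dist y z = G.dist y u + G.dist u z) :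
    G.dist u z ≤ subtreeHeight G y u := by
  classical
  exact Finset.le_sup (f := G.dist u) (Finset.mem_filter.mpr ⟨Finset.mem_univ z, h⟩)

lemma subtreeHeight_le (h : ∀ z, G.dist y z = G.dist y u + G.dist u z → G.dist u z ≤ n) :
    subtreeHeight G y u ≤ n := by
  classical
  exact Finset.sup_le fun z hz => h z (Finset.mem_filter.mp hz).2

lemma exists_dist_eq_subtreeHeight :
    ∃ z, G.dist y z = G.dist y u + G.dist u z ∧ G.dist u z = subtreeHeight G y u := by
  classical
  obtain ⟨z, hz, hzh⟩ := Finset.exists_mem_eq_sup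
    (Finset.univ.filter fun z => G.dist y z = G.dist y u + G.dist u z)
    ⟨u, by simp⟩ (G.dist u)
  exact ⟨z, (Finset.mem_filter.mp hz).2, hzh.symm⟩

lemma subtreeHeight_lt_of_adj (hc : G.Connected) (hx : G.Adj u x)
    (hxd : G.dist y x = G.dist y u + 1) : subtreeHeight G y x < subtreeHeight G y u := by
  obtain ⟨z, hz, hzh⟩ := exists_dist_eq_subtreeHeight (G := G) (y := y) (u := x)
  have h₁ := hc.dist_triangle (u := y) (v := u) (w := z)
  have h₂ := hc.dist_triangle (u := u) (v := x) (w := z)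
  have hux : G.dist u x = 1 := dist_eq_one_iff_adj.mpr hx
  have := dist_le_subtreeHeight (G := G) (y := y) (u := u) (z := z) (by omega)
  omega

lemma exists_adj_subtreeHeight_add_one_eq (hc : G.Connected) (h : 0 < subtreeHeight G y u) :
    ∃ x, G.Adj u x ∧ G.dist y x = G.dist y u + 1 ∧
      subtreeHeight G y x + 1 = subtreeHeight G y u := by
  obtain ⟨z, hz, hzh⟩ := exists_dist_eq_subtreeHeight (G := G) (y := y) (u := u)
  obtain ⟨x, hx, hxz⟩ := hc.exists_adj_dist_eq_add_one (x := u) (y := z)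
    (by rintro rfl; simp_all)
  have hux : G.dist u x = 1 := dist_eq_one_iff_adj.mpr hx
  have h₁ := hc.dist_triangle (u := y) (v := x) (w := z)
  have h₂ := hc.dist_triangle (u := y) (v := u) (w := x)
  have hxd : G.dist y x = G.dist y u + 1 := by omega
  have := dist_le_subtreeHeight (G := G) (y := y) (u := x) (z := z) (by omega)
  have := subtreeHeight_lt_of_adj hc hx hxd
  exact ⟨x, hx, hxd, by omega⟩

lemma isKLeaf_subtreeHeight (hG : G.IsTree) (h : u ≠ y) : IsKLeaf G (subtreeHeight G y u) u := by
  have hc := hG.connected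
  suffices ∀ n u, u ≠ y → subtreeHeight G y u = n → IsKLeaf G n u from this _ u h rfl
  intro n
  induction n using Nat.strong_induction_on with
  | _ n ih =>
  intro u huy hn
  have hne_root : ∀ x, G.dist y x = G.dist y u + 1 → x ≠ y := by
    rintro x hx rfl
    simp at hx
  obtain ⟨p, hp, hpd⟩ := hc.exists_adj_dist_eq_add_one huy
  have hpd' : G.dist y p < G.dist y u := by
    rw [dist_comm (u := y) (v := p), dist_comm (u := y) (v := u)]
    omega
  have hchild : ∀ x, G.Adj u x → x ≠ p → G.dist y x = G.dist y u + 1 :=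
    fun x hx hne => hG.dist_eq_add_one_of_adj_of_ne hp hpd' hx hne
  cases n with
  | zero =>
    rw [IsKLeaf, IsLeafV]
    refine ⟨p, hp, fun x hx => by_contra fun hne => ?_⟩
    have := subtreeHeight_lt_of_adj hc hx (hchild x hx hne)
    omega
  | succ n =>
    rw [IsKLeaf]
    obtain ⟨x, hx, hxd, hxh⟩ :=
      exists_adj_subtreeHeight_add_one_eq hc (y := y) (u := u) (by omega)
    refine ⟨⟨x, hx, ih n (by omega) x (hne_root x hxd) (by omega)⟩, p, fun x hx hne => ?_⟩
    have := subtreeHeight_lt_of_adj hc hx (hchild x hx hne)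
    exact ⟨_, by omega, ih _ (by omega) x (hne_root x (hchild x hx hne)) rfl⟩

/-- If a finite tree has diameter at least `2k` (`k ≥ 1`), then it contains
a `k`-leaf. -/
theorem exists_kLeaf_of_big_diam {V : Type u} [Fintype V] (G : SimpleGraph V)
    (hG : G.IsTree) (k : ℕ) (hk : 0 < k) (hdiam : ((2 * k : ℕ) : ℕ∞) ≤ G.ediam) :
    ∃ v : V, IsKLeaf G k v := by
  have hc := hG.connected
  have := hc.nonempty
  have hfin : G.ediam ≠ ⊤ := connected_iff_ediam_ne_top.mp hc
  obtain ⟨y, x, hyx⟩ := G.exists_dist_eq_diam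
  have hfar : ∀ z, G.dist y z ≤ G.dist y x := fun z => hyx ▸ dist_le_diam hfin
  have h2k : 2 * k ≤ G.dist y x := by
    rw [hyx, diam, ← ENat.natCast_le_natCast, ENat.natCast_toNat hfin]
    exact_mod_cast hdiam
  obtain ⟨u, hyu, hux⟩ := hc.exists_dist_eq_of_le (Nat.sub_le (G.dist y x) k)
  have huy : u ≠ y := by rintro rfl; simp at hyu; omega
  have hheight : subtreeHeight G y u = k := by
    refine le_antisymm (subtreeHeight_le fun z hz => ?_) ?_
    · have := hfar z
      omega
    · exact (dist_le_subtreeHeight (z := x) (by omega)).trans_eq' (by omega)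
  exact ⟨u, hheight ▸ isKLeaf_subtreeHeight hG huy⟩

end EternalDom
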